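/- arXiv:2106.13051 — 4 statements merged into one kernel-verified Lean document; each statement's English description precedes it below -/
import Mathlib

section
/- Let Γ be a finitely generated torsion-free nilpotent group and σ a unipotent automorphism of Γ, i.e., one for which the induced automorphism of gr Γ ≅ ℤ^h is unipotent. If Γ is nontrivial, then there exists a normal subgroup Γ' ≤ Γ with Γ/Γ' ≅ ℤ such that σ(Γ') = Γ' and σ acts trivially on Γ/Γ'. -/
/-!
Embed `Γ` as the normal subgroup `K = inl Γ` of the nilpotent group `H = Γ ⋊_σ ℤ`. Since
`σ x * x⁻¹` is the commutator of the generator of `ℤ` with `x`, the automorphism `σ` acts trivially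
on the image of `Γ` in `H ⧸ ⁅K, H⁆`, and this image is abelian and finitely generated.

It is not torsion. Modulo the next term of the series `K ≥ ⁅K, H⁆ ≥ ⁅⁅K, H⁆, H⁆ ≥ ⋯`, commutation
with a fixed `h` is a homomorphism, so each term is torsion modulo the next as soon as the first
one is. The series ends at `1` because `H` is nilpotent, so `Γ` would be torsion, contradicting
torsion-freeness. A finitely generated abelian group that is not torsion maps onto `ℤ`, and `Γ'` is
the kernel of the composite `Γ → ℤ`.
-/

open Subgroup
open scoped commutatorElement IsMulCommutative

namespace QuotientGroup

variable {H : Type*} [Group H]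

theorem isOfFinOrder_mk_iff {N : Subgroup H} [N.Normal] {x : H} :
    IsOfFinOrder (x : H ⧸ N) ↔ ∃ n, 0 < n ∧ x ^ n ∈ N := by
  simp only [isOfFinOrder_iff_pow_eq_one, ← mk_pow, eq_one_iff]

variable {A B C : Subgroup H} [C.Normal]

theorem commute_mk_of_commutator_le (hBC : ⁅B, ⊤⁆ ≤ C) {b : H} (hb : b ∈ B) (h : H) :
    Commute (b : H ⧸ C) h := by
  rw [← commutatorElement_eq_one_iff_commute, ← mk'_apply, ← mk'_apply, ← map_commutatorElement,
    mk'_apply, eq_one_iff]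
  exact hBC (commutator_mem_commutator hb (mem_top h))

theorem mk_commutatorElement_pow (hAB : ⁅A, ⊤⁆ ≤ B) (hBC : ⁅B, ⊤⁆ ≤ C) {a : H} (ha : a ∈ A)
    (h : H) (n : ℕ) : ((⁅a ^ n, h⁆ : H) : H ⧸ C) = ((⁅a, h⁆ : H) : H ⧸ C) ^ n := by
  induction n with
  | zero => simp
  | succ n ih =>
    have hcomm : Commute (a : H ⧸ C) (⁅a ^ n, h⁆ : H) :=
      (commute_mk_of_commutator_le hBC
        (hAB (commutator_mem_commutator (pow_mem ha n) (mem_top h))) a).symm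
    have expand : ⁅a ^ (n + 1), h⁆ = a * ⁅a ^ n, h⁆ * a⁻¹ * ⁅a, h⁆ := by
      simp only [commutatorElement_def, pow_succ']
      group
    rw [expand, mk_mul, mk_mul, mk_mul, mk_inv, hcomm.eq, mul_inv_cancel_right, ih, pow_succ]

/-- Modulo `C`, the map `a ↦ ⁅a, h⁆` is a homomorphism on `A` with central values. -/
theorem isOfFinOrder_mk_of_mem_commutator [B.Normal] (hAB : ⁅A, ⊤⁆ ≤ B) (hBC : ⁅B, ⊤⁆ ≤ C)
    (hA : ∀ a ∈ A, IsOfFinOrder (a : H ⧸ B)) {x : H} (hx : x ∈ ⁅A, (⊤ : Subgroup H)⁆) :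
    IsOfFinOrder (x : H ⧸ C) := by
  rw [Subgroup.commutator_def] at hx
  induction hx using closure_induction with
  | mem x hx =>
    obtain ⟨a, ha, h, -, rfl⟩ := hx
    obtain ⟨n, hn, han⟩ := isOfFinOrder_mk_iff.mp (hA a ha)
    refine isOfFinOrder_iff_pow_eq_one.mpr ⟨n, hn, ?_⟩
    rw [← mk_commutatorElement_pow hAB hBC ha, eq_one_iff]
    exact hBC (commutator_mem_commutator han (mem_top h))
  | one => exact IsOfFinOrder.one
  | mul x y hx _ hxf hyf =>
    rw [← Subgroup.commutator_def] at hx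
    exact mk_mul C x y ▸ (commute_mk_of_commutator_le hBC (hAB hx) y).isOfFinOrder_mul hxf hyf
  | inv x _ hxf => exact mk_inv C x ▸ hxf.inv

end QuotientGroup

namespace Subgroup

open QuotientGroup

variable {H : Type*} [Group H] (K : Subgroup H)

def relLowerCentralSeries : ℕ → Subgroup H
  | 0 => K
  | n + 1 => ⁅relLowerCentralSeries n, ⊤⁆

instance relLowerCentralSeries_normal [K.Normal] (n : ℕ) : (K.relLowerCentralSeries n).Normal := by
  induction n with
  | zero => assumption
  | succ n ih => exact commutator_normal _ _

theorem relLowerCentralSeries_le_lowerCentralSeries (n : ℕ) :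
    K.relLowerCentralSeries n ≤ (⊤ : Subgroup H).lowerCentralSeries n := by
  induction n with
  | zero => exact le_top
  | succ n ih => exact commutator_mono ih le_rfl

variable {K} [K.Normal]

theorem isOfFinOrder_mk_relLowerCentralSeries_succ
    (hK : ∀ k ∈ K, IsOfFinOrder (k : H ⧸ ⁅K, (⊤ : Subgroup H)⁆)) (n : ℕ) :
    ∀ x ∈ K.relLowerCentralSeries n, IsOfFinOrder (x : H ⧸ K.relLowerCentralSeries (n + 1)) := by
  induction n with
  | zero => exact hK
  | succ n ih => exact fun x => isOfFinOrder_mk_of_mem_commutator le_rfl le_rfl ih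

theorem isOfFinOrder_mk_relLowerCentralSeries
    (hK : ∀ k ∈ K, IsOfFinOrder (k : H ⧸ ⁅K, (⊤ : Subgroup H)⁆)) {k : H} (hk : k ∈ K) (n : ℕ) :
    IsOfFinOrder (k : H ⧸ K.relLowerCentralSeries n) := by
  induction n with
  | zero => exact (eq_one_iff k).mpr hk ▸ IsOfFinOrder.one
  | succ n ih =>
    obtain ⟨m, hm, hkm⟩ := isOfFinOrder_mk_iff.mp ih
    have hfin := isOfFinOrder_mk_relLowerCentralSeries_succ hK n _ hkm
    rw [mk_pow, isOfFinOrder_pow] at hfin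
    exact hfin.resolve_right hm.ne'

theorem isOfFinOrder_of_isOfFinOrder_mk_commutator [Group.IsNilpotent H]
    (hK : ∀ k ∈ K, IsOfFinOrder (k : H ⧸ ⁅K, (⊤ : Subgroup H)⁆)) {k : H} (hk : k ∈ K) :
    IsOfFinOrder k := by
  obtain ⟨n, hn⟩ := nilpotent_iff_lowerCentralSeries.mp ‹Group.IsNilpotent H›
  obtain ⟨m, hm, hkm⟩ := isOfFinOrder_mk_iff.mp (isOfFinOrder_mk_relLowerCentralSeries hK hk n)
  have hkm_one : k ^ m = 1 := by
    simpa [hn] using relLowerCentralSeries_le_lowerCentralSeries K n hkm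
  exact isOfFinOrder_iff_pow_eq_one.mpr ⟨m, hm, hkm_one⟩

end Subgroup

theorem AddCommGroup.exists_surjective_int_of_not_isOfFinAddOrder {A : Type*} [AddCommGroup A]
    [AddGroup.FG A] {a : A} (ha : ¬IsOfFinAddOrder a) : ∃ f : A →+ ℤ, Function.Surjective f := by
  have : Module.Finite ℤ A := Module.Finite.iff_addGroup_fg.mpr ‹_›
  let T := Submodule.torsion ℤ A
  have haT : a ∉ T := by
    rwa [← Submodule.mem_toAddSubgroup, Submodule.torsion_int]
  have : Nontrivial (A ⧸ T) :=
    ⟨⟨T.mkQ a, 0, by rwa [ne_eq, Submodule.mkQ_apply, Submodule.Quotient.mk_eq_zero]⟩⟩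
  let b := Module.Free.chooseBasis ℤ (A ⧸ T)
  obtain ⟨i⟩ := b.index_nonempty
  refine ⟨((b.coord i).comp T.mkQ).toAddMonoidHom, fun n => ?_⟩
  obtain ⟨x, hx⟩ := T.mkQ_surjective (n • b i)
  exact ⟨x, by simp [hx]⟩

theorem CommGroup.exists_surjective_multiplicative_int_of_not_isOfFinOrder {A : Type*}
    [CommGroup A] [Group.FG A] {a : A} (ha : ¬IsOfFinOrder a) :
    ∃ f : A →* Multiplicative ℤ, Function.Surjective f := by
  obtain ⟨f, hf⟩ := AddCommGroup.exists_surjective_int_of_not_isOfFinAddOrder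
    (a := Additive.ofMul a) (by rwa [isOfFinAddOrder_ofMul_iff])
  exact ⟨AddMonoidHom.toMultiplicativeRight f, hf⟩

namespace SemidirectProduct

variable {N G : Type*} [Group N] [Group G] (φ : G →* MulAut N)

theorem commutatorElement_inr_inl (g : G) (n : N) :
    ⁅(inr g : N ⋊[φ] G), (inl n : N ⋊[φ] G)⁆ = inl (φ g n * n⁻¹) := by
  rw [commutatorElement_def, ← map_inv, ← inl_aut, map_mul, map_inv]

instance range_inl_normal : (inl : N →* N ⋊[φ] G).range.Normal :=
  range_inl_eq_ker_rightHom (φ := φ) ▸ inferInstance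

theorem mk_inl_apply_eq_mk_inl (g : G) (n : N) :
    QuotientGroup.mk' ⁅(inl : N →* N ⋊[φ] G).range, (⊤ : Subgroup (N ⋊[φ] G))⁆ (inl (φ g n)) =
      QuotientGroup.mk' _ (inl n) := by
  rw [QuotientGroup.mk'_apply, QuotientGroup.mk'_apply, QuotientGroup.eq_iff_div_mem,
    div_eq_mul_inv, ← map_inv, ← map_mul, ← commutatorElement_inr_inl, commutator_comm]
  exact commutator_mem_commutator (mem_top _) ⟨n, rfl⟩

end SemidirectProduct

theorem MonoidHom.map_ker_of_forall_apply_eq {G M : Type*} [Group G] [MulOneClass M]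
    (F : G →* M) (σ : MulAut G) (hF : ∀ x, F (σ x) = F x) :
    F.ker.map σ.toMonoidHom = F.ker := by
  rw [map_equiv_eq_comap_symm', comap_ker]
  congr 1
  ext x
  simpa using (hF (σ.symm x)).symm

theorem statement6_general (G : Type*) [Group G] [Nontrivial G] (hfg : Group.FG G)
    (htf : ∀ g : G, g ≠ 1 → ¬IsOfFinOrder g) (σ : MulAut G)
    (hunip : Group.IsNilpotent (G ⋊[zpowersHom (MulAut G) σ] Multiplicative ℤ)) :
    ∃ Γ' : Subgroup G,
      (∃ f : G →* Multiplicative ℤ, Function.Surjective f ∧ f.ker = Γ') ∧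
      Subgroup.map σ.toMonoidHom Γ' = Γ' ∧
      ∀ x : G, (QuotientGroup.mk (σ x) : G ⧸ Γ') = QuotientGroup.mk x := by
  let H := G ⋊[zpowersHom (MulAut G) σ] Multiplicative ℤ
  let K : Subgroup H := SemidirectProduct.inl.range
  let φ : G →* H ⧸ ⁅K, ⊤⁆ := (QuotientGroup.mk' _).comp SemidirectProduct.inl
  have hφσ (x : G) : φ (σ x) = φ x := by
    rw [show σ x = zpowersHom (MulAut G) σ (Multiplicative.ofAdd 1) x by simp]
    exact SemidirectProduct.mk_inl_apply_eq_mk_inl _ _ x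
  have : IsMulCommutative φ.range := ⟨⟨by
    rintro ⟨_, x, rfl⟩ ⟨_, y, rfl⟩
    exact Subtype.ext (QuotientGroup.commute_mk_of_commutator_le (B := K) le_rfl ⟨x, rfl⟩ _)⟩⟩
  obtain ⟨_, ⟨g, rfl⟩, hg⟩ : ∃ k ∈ K, ¬IsOfFinOrder (k : H ⧸ ⁅K, (⊤ : Subgroup H)⁆) := by
    obtain ⟨g, hg⟩ := exists_ne (1 : G)
    by_contra! h
    exact htf g hg (SemidirectProduct.inl_injective.isOfFinOrder_iff.mp
      (isOfFinOrder_of_isOfFinOrder_mk_commutator h ⟨g, rfl⟩))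
  obtain ⟨f, hf⟩ := CommGroup.exists_surjective_multiplicative_int_of_not_isOfFinOrder
    (a := φ.rangeRestrict g) fun h => hg (φ.range.subtype.isOfFinOrder h)
  let F := f.comp φ.rangeRestrict
  have hFσ (x : G) : F (σ x) = F x := congrArg f (Subtype.ext (hφσ x))
  exact ⟨F.ker, ⟨F, hf.comp φ.rangeRestrict_surjective, rfl⟩, F.map_ker_of_forall_apply_eq σ hFσ,
    fun x => QuotientGroup.kerLift_injective F (by simpa using hFσ x)⟩

/-- Let `Γ` be a nontrivial finitely generated torsion-free nilpotent group and `σ` a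
unipotent automorphism of `Γ`; unipotence is expressed by the equivalent condition that
the semidirect product `Γ ⋊_σ ℤ` is nilpotent.  Then there exists a normal subgroup
`Γ' ≤ Γ` with `Γ/Γ' ≅ ℤ` (realized as the kernel of a surjection onto `ℤ`) such that
`σ(Γ') = Γ'` and `σ` acts trivially on `Γ/Γ'`. -/
theorem statement6 (G : Type*) [Group G] [Nontrivial G] (hfg : Group.FG G)
    (htf : ∀ g : G, g ≠ 1 → ¬IsOfFinOrder g) (hnilp : Group.IsNilpotent G) (σ : MulAut G)
    (hunip : Group.IsNilpotent (G ⋊[zpowersHom (MulAut G) σ] Multiplicative ℤ)) :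
    ∃ Γ' : Subgroup G,
      (∃ f : G →* Multiplicative ℤ, Function.Surjective f ∧ f.ker = Γ') ∧
      Subgroup.map σ.toMonoidHom Γ' = Γ' ∧
      ∀ x : G, (QuotientGroup.mk (σ x) : G ⧸ Γ') = QuotientGroup.mk x :=
  statement6_general G hfg htf σ hunip
end

section
/- Let Γ be a group, Λ ≤ Γ an infinite subgroup, S ⊂ Λ \ {1} a finite set, and 0 < δ < 1. If Γ' ≤ Γ is a finite index subgroup such that fx_{Γ,γ}(Γ') < δ²/|S| for all γ ∈ S, then the proportion of cosets g ∈ Γ/Γ' for which fx_{Λ,γ}(gΓ'g^{-1} ∩ Λ) < δ holds for all γ ∈ S is at least 1 − δ. -/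
/-!
The subgroup `gΓ'g⁻¹ ∩ Λ` of `Λ` is the stabilizer of the coset `gΓ'` for the action of `Λ` on
`Γ/Γ'`, so `fx_{Λ,γ}` of it is the proportion of fixed points of `γ` in the `Λ`-orbit of `gΓ'`.
Summing these proportions over all cosets counts every fixed point of `γ` on `Γ/Γ'` once, so
the average over `g` of `fx_{Λ,γ}(gΓ'g⁻¹ ∩ Λ)` is `fx_{Γ,γ}(Γ') < δ²/|S|`. By Markov's inequality
at most a `δ/|S|` proportion of cosets has `fx_{Λ,γ} ≥ δ`, and a union bound over `γ ∈ S` leaves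
a proportion of at least `1 - δ` of good cosets.
-/

/-- The fixed point ratio of `g` acting on the coset space `G ⧸ H`:
`fx_{G,g}(H) = |{xH : gxH = xH}| / [G : H]`. -/
noncomputable def fxRatio {G : Type*} [Group G] (H : Subgroup G) (g : G) : ℝ :=
  (Nat.card {x : G ⧸ H // g • x = x} : ℝ) / H.index

open MulAction Finset

namespace MulAction

variable {G X : Type*} [Group G] [MulAction G X]

theorem map_conj_out_eq_stabilizer (H : Subgroup G) (x : G ⧸ H) :
    H.map (MulAut.conj x.out).toMonoidHom = stabilizer G x := by
  have h := stabilizer_smul_eq_stabilizer_map_conj x.out ((1 : G) : G ⧸ H)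
  rw [stabilizer_quotient] at h
  simpa using h.symm

theorem stabilizer_subgroupOf (K : Subgroup G) (x : X) :
    (stabilizer G x).subgroupOf K = stabilizer K x := rfl

theorem smul_orbitEquivQuotientStabilizer_symm (x : X) (g : G) (q : G ⧸ stabilizer G x) :
    ((orbitEquivQuotientStabilizer G x).symm (g • q) : X) =
      g • ((orbitEquivQuotientStabilizer G x).symm q : X) := by
  induction q using QuotientGroup.induction_on with
  | H a => simp [mul_smul]

theorem card_fixed_quotient_stabilizer (x : X) (g : G) :
    Nat.card {q : G ⧸ stabilizer G x // g • q = q} = (orbit G x ∩ fixedBy X g).ncard := by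
  set e := (orbitEquivQuotientStabilizer G x).symm
  have hfix : ∀ q, g • q = q ↔ g • (e q : X) = e q := fun q => by
    rw [← smul_orbitEquivQuotientStabilizer_symm, Subtype.coe_inj, e.apply_eq_iff_eq]
  rw [Nat.card_congr (e.subtypeEquiv (q := fun y : orbit G x => g • (y : X) = y) hfix),
    ← Nat.card_coe_set_eq]
  exact Nat.card_congr (Equiv.subtypeSubtypeEquivSubtypeInter (· ∈ orbit G x) (· ∈ fixedBy X g))

theorem fxRatio_stabilizer (x : X) (g : G) :
    fxRatio (stabilizer G x) g = ((orbit G x ∩ fixedBy X g).ncard : ℝ) / (orbit G x).ncard := by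
  rw [fxRatio, card_fixed_quotient_stabilizer, index_stabilizer]

theorem sum_ncard_inter_orbit_div [Fintype X] (F : Set X) :
    ∑ x, ((orbit G x ∩ F).ncard : ℝ) / (orbit G x).ncard = F.ncard := by
  classical
  have hncard : ∀ (s : Set X) (c : ℝ), ∑ y, (if y ∈ s then c else 0) = s.ncard * c := by
    intro s c
    rw [Finset.sum_ite, sum_const_zero, add_zero, sum_const, nsmul_eq_mul,
      Set.filter_mem_univ_eq_toFinset, Set.ncard_eq_toFinset_card']
  have hcount : ∀ x, ((orbit G x ∩ F).ncard : ℝ) / (orbit G x).ncard =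
      ∑ y, if y ∈ F then (if x ∈ orbit G y then ((orbit G y).ncard : ℝ)⁻¹ else 0) else 0 := by
    intro x
    rw [div_eq_mul_inv, ← hncard]
    refine sum_congr rfl fun y _ => ?_
    -- `y ∈ orbit x ↔ x ∈ orbit y`, and then the two orbits coincide
    by_cases hxy : x ∈ orbit G y
    · simp [hxy, orbit_eq_iff.mpr hxy]
    · simp [hxy, mt mem_orbit_symm.mp hxy]
  have horbit : ∀ y : X, ∑ x, (if x ∈ orbit G y then ((orbit G y).ncard : ℝ)⁻¹ else 0) = 1 :=
    fun y => by
    rw [hncard, mul_inv_cancel₀]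
    exact_mod_cast ((Set.ncard_pos).mpr (nonempty_orbit y)).ne'
  simp_rw [hcount]
  rw [Finset.sum_comm]
  simp_rw [sum_ite_irrel, horbit, sum_const_zero, hncard, mul_one]

theorem sum_fxRatio_stabilizer [Fintype X] (g : G) :
    ∑ x : X, fxRatio (stabilizer G x) g = (fixedBy X g).ncard := by
  simp_rw [fxRatio_stabilizer]
  exact sum_ncard_inter_orbit_div _

end MulAction

theorem Finset.mul_card_filter_le_le_sum {X : Type*} (s : Finset X) (f : X → ℝ)
    (hf : ∀ x ∈ s, 0 ≤ f x) (δ : ℝ) : δ * #{x ∈ s | δ ≤ f x} ≤ ∑ x ∈ s, f x :=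
  calc δ * #{x ∈ s | δ ≤ f x} = ∑ _x ∈ s with δ ≤ f _x, δ := by
        rw [sum_const, nsmul_eq_mul, mul_comm]
    _ ≤ ∑ x ∈ s with δ ≤ f x, f x := sum_le_sum fun x hx => (mem_filter.mp hx).2
    _ ≤ ∑ x ∈ s, f x := sum_le_sum_of_subset_of_nonneg (filter_subset _ _) fun x hx _ => hf x hx

theorem one_sub_mul_card_le_card_forall_lt {ι X : Type*} [Fintype X] (S : Finset ι) (f : ι → X → ℝ)
    (hf : ∀ i x, 0 ≤ f i x) {δ : ℝ} (hδ : 0 < δ)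
    (hsum : ∀ i ∈ S, ∑ x, f i x ≤ δ ^ 2 / #S * Fintype.card X) :
    (1 - δ) * Fintype.card X ≤ Nat.card {x // ∀ i ∈ S, f i x < δ} := by
  classical
  have hmarkov : ∀ i ∈ S, (#{x | δ ≤ f i x} : ℝ) ≤ δ * Fintype.card X / #S := fun i hi => by
    refine le_of_mul_le_mul_left ?_ hδ
    calc δ * #{x | δ ≤ f i x} ≤ ∑ x, f i x := mul_card_filter_le_le_sum _ _ (fun x _ => hf i x) δ
      _ ≤ δ * (δ * Fintype.card X / #S) := (hsum i hi).trans_eq (by ring)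
  have hbad : (#{x | ¬ ∀ i ∈ S, f i x < δ} : ℝ) ≤ δ * Fintype.card X :=
    calc (#{x | ¬ ∀ i ∈ S, f i x < δ} : ℝ) ≤ ∑ i ∈ S, (#{x | δ ≤ f i x} : ℝ) := by
          have hsub : ({x | ¬ ∀ i ∈ S, f i x < δ} : Finset X) ⊆
              S.biUnion fun i => {x | δ ≤ f i x} := fun x hx => by simpa using hx
          exact_mod_cast (card_le_card hsub).trans card_biUnion_le
      _ ≤ ∑ _i ∈ S, δ * Fintype.card X / #S := sum_le_sum hmarkov
      _ ≤ δ * Fintype.card X := by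
          rw [sum_const, nsmul_eq_mul]
          rcases (#S).eq_zero_or_pos with hS | hS
          · simp only [hS, CharP.cast_eq_zero, zero_mul]
            positivity
          · rw [mul_div_cancel₀ _ (by positivity)]
  have hsplit : (#{x | ∀ i ∈ S, f i x < δ} : ℝ) + #{x | ¬ ∀ i ∈ S, f i x < δ} =
      Fintype.card X := by
    exact_mod_cast card_filter_add_card_filter_not _
  rw [Nat.card_eq_fintype_card, Fintype.card_subtype]
  linarith

theorem fxRatio_mul_index {G : Type*} [Group G] (H : Subgroup G) [H.FiniteIndex] (g : G) :
    fxRatio H g * H.index = (fixedBy (G ⧸ H) g).ncard := by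
  rw [fxRatio, div_mul_cancel₀ _ (Nat.cast_ne_zero.mpr Subgroup.FiniteIndex.index_ne_zero),
    ← Nat.card_coe_set_eq]
  rfl

theorem statement9_general {Γ : Type*} [Group Γ] (Λ : Subgroup Γ)
    (S : Finset ↥Λ) (δ : ℝ) (hδ0 : 0 < δ)
    (Γ' : Subgroup Γ) (hfi : Γ'.FiniteIndex)
    (hfx : ∀ γ ∈ S, fxRatio Γ' (γ : Γ) < δ ^ 2 / S.card) :
    1 - δ ≤
      (Nat.card {x : Γ ⧸ Γ' // ∀ γ ∈ S,
          fxRatio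
            ((Subgroup.map (MulAut.conj (Quotient.out x)).toMonoidHom Γ' ⊓ Λ).subgroupOf Λ)
            γ < δ} : ℝ) / Γ'.index := by
  have : Fintype (Γ ⧸ Γ') := Fintype.ofFinite _
  have hindex : (Γ'.index : ℝ) = Fintype.card (Γ ⧸ Γ') := by
    rw [Subgroup.index, Nat.card_eq_fintype_card]
  simp only [map_conj_out_eq_stabilizer, Subgroup.inf_subgroupOf_right, stabilizer_subgroupOf]
  rw [le_div_iff₀ (by exact_mod_cast Nat.pos_of_ne_zero hfi.index_ne_zero), hindex]
  refine one_sub_mul_card_le_card_forall_lt S (fun γ x => fxRatio (stabilizer Λ x) γ)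
    (fun _ _ => by unfold fxRatio; positivity) hδ0 fun γ hγ => ?_
  calc ∑ x, fxRatio (stabilizer Λ x) γ = (fixedBy (Γ ⧸ Γ') (γ : Γ)).ncard :=
        sum_fxRatio_stabilizer γ
    _ = fxRatio Γ' γ * Γ'.index := (fxRatio_mul_index Γ' γ).symm
    _ ≤ δ ^ 2 / S.card * Fintype.card (Γ ⧸ Γ') := by
      rw [← hindex]
      exact mul_le_mul_of_nonneg_right (hfx γ hγ).le (Nat.cast_nonneg _)

/-- Let `Λ ≤ Γ` be an infinite subgroup, `S ⊆ Λ \ {1}` finite and `0 < δ < 1`.  If `Γ' ≤ Γ`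
has finite index and `fx_{Γ,γ}(Γ') < δ²/|S|` for all `γ ∈ S`, then the proportion of cosets
`g ∈ Γ/Γ'` for which `fx_{Λ,γ}(gΓ'g⁻¹ ∩ Λ) < δ` holds for every `γ ∈ S` is at least
`1 − δ`. -/
theorem statement9 {Γ : Type*} [Group Γ] (Λ : Subgroup Γ) (hΛ : Infinite ↥Λ)
    (S : Finset ↥Λ) (hS : (1 : ↥Λ) ∉ S) (δ : ℝ) (hδ0 : 0 < δ) (hδ1 : δ < 1)
    (Γ' : Subgroup Γ) (hfi : Γ'.FiniteIndex)
    (hfx : ∀ γ ∈ S, fxRatio Γ' (γ : Γ) < δ ^ 2 / S.card) :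
    1 - δ ≤
      (Nat.card {x : Γ ⧸ Γ' // ∀ γ ∈ S,
          fxRatio
            ((Subgroup.map (MulAut.conj (Quotient.out x)).toMonoidHom Γ' ⊓ Λ).subgroupOf Λ)
            γ < δ} : ℝ) / Γ'.index :=
  statement9_general Λ S δ hδ0 Γ' hfi hfx
end

section
/- Let Γ be a group generated by elements γ_1, …, γ_m, each of infinite order, with [γ_i, γ_{i+1}] = 1 for 1 ≤ i ≤ m−1 (a chain-commuting generating set). Let G be the graph whose vertices are the subgroups gH_ig^{-1} (g ∈ Γ, H_i = ⟨γ_i⟩), with an edge between two distinct vertices whenever the subgroup they generate is abelian. Then G is connected, and Γ acts on G by conjugation with finite quotient (on m vertex orbits), with all vertex and edge stabilizers containing an infinite cyclic normal subgroup. -/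
/-!
For fixed `g`, the vertices `g⟨γ₁⟩g⁻¹, …, g⟨γₘ⟩g⁻¹` lie on a path, since consecutive generators
commute. Since `γⱼ` normalizes `⟨γⱼ⟩`, the paths for `g` and for `gγⱼ` share the vertex
`g⟨γⱼ⟩g⁻¹`; as the `γⱼ` generate `Γ`, all these paths lie in one component. On an edge `{H, K}`,
`H` centralizes, hence normalizes, `K`.
-/

open Subgroup

section Graph

variable {V : Type*} {G : SimpleGraph V}

theorem SimpleGraph.reachable_of_forall_reachable_succ {m : ℕ} {f : Fin m → V}
    (hf : ∀ i : Fin m, ∀ h : (i : ℕ) + 1 < m, G.Reachable (f i) (f ⟨i + 1, h⟩)) (i j : Fin m) :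
    G.Reachable (f i) (f j) := by
  have forward : ∀ (i : Fin m) (k : ℕ) (h : (i : ℕ) + k < m),
      G.Reachable (f i) (f ⟨i + k, h⟩) := by
    intro i k
    induction k with
    | zero => exact fun _ => .refl _
    | succ k ih => exact fun h => (ih (by omega)).trans (hf ⟨i + k, by omega⟩ h)
  have forward_of_le : ∀ i j : Fin m, i ≤ j → G.Reachable (f i) (f j) := by
    intro i j hij
    obtain ⟨k, hk⟩ := Nat.exists_eq_add_of_le (Fin.le_def.mp hij)
    convert forward i k (hk ▸ j.2)
  rcases le_total i j with hij | hji
  · exact forward_of_le i j hij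
  · exact (forward_of_le j i hji).symm

theorem SimpleGraph.reachable_of_closure_eq_top {M : Type*} [Group M] {S : Set M}
    (hS : closure S = ⊤) {f : M → V} (hf : ∀ g, ∀ s ∈ S, G.Reachable (f g) (f (g * s)))
    (g : M) : G.Reachable (f 1) (f g) := by
  induction (hS ▸ mem_top g : g ∈ closure S) using closure_induction_right with
  | one => exact .refl _
  | mul_right x _ s hs ih => exact ih.trans (hf x s hs)
  | mul_inv_cancel x _ s hs ih =>
    exact ih.trans (by simpa using (hf (x * s⁻¹) s hs).symm)

end Graph

section Conjugation

variable {Γ : Type*} [Group Γ]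

theorem Subgroup.map_conj_mul (a b : Γ) (H : Subgroup Γ) :
    H.map (MulAut.conj (a * b)).toMonoidHom =
      (H.map (MulAut.conj b).toMonoidHom).map (MulAut.conj a).toMonoidHom := by
  rw [map_map]
  congr 1
  ext x
  simp [mul_assoc]

theorem Subgroup.isMulCommutative_zpowers_sup_zpowers {a b : Γ} (h : Commute a b) :
    IsMulCommutative ↥(zpowers a ⊔ zpowers b) := by
  rw [zpowers_eq_closure, zpowers_eq_closure, ← Subgroup.closure_union, Set.singleton_union]
  refine isMulCommutative_closure ?_
  rintro x (rfl | rfl) y (rfl | rfl)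
  exacts [rfl, h.eq, h.symm.eq, rfl]

theorem Subgroup.le_normalizer_inf_normalizer_of_isMulCommutative_sup {H K : Subgroup Γ}
    (h : IsMulCommutative ↥(H ⊔ K)) : H ≤ normalizer (H : Set Γ) ⊓ normalizer (K : Set Γ) :=
  le_inf le_normalizer <| le_sup_left.trans <|
    (le_centralizer_iff_isMulCommutative.mpr h).trans <|
      (centralizer_le (SetLike.coe_subset_coe.mpr le_sup_right)).trans
        (centralizer_le_normalizer _)

def commutingGraph (V : Set (Subgroup Γ)) : SimpleGraph V where
  Adj H K := H ≠ K ∧ IsMulCommutative ↥(H.1 ⊔ K.1)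
  symm := ⟨fun H K h => ⟨h.1.symm, by rw [sup_comm]; exact h.2⟩⟩
  loopless := ⟨fun H h => h.1 rfl⟩

theorem commutingGraph.reachable_of_isMulCommutative_sup {V : Set (Subgroup Γ)} {H K : V}
    (h : IsMulCommutative ↥(H.1 ⊔ K.1)) : (commutingGraph V).Reachable H K := by
  by_cases hHK : H = K
  · exact hHK ▸ .refl _
  · exact SimpleGraph.Adj.reachable ⟨hHK, h⟩

end Conjugation

section ConjugatesOfZPowers

variable {Γ ι : Type*} [Group Γ] (γ : ι → Γ)

def conjugatesOfZPowers : Set (Subgroup Γ) :=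
  {H | ∃ (g : Γ) (i : ι), H = (zpowers (γ i)).map (MulAut.conj g).toMonoidHom}

def conjugatesOfZPowers.mk (g : Γ) (i : ι) : conjugatesOfZPowers γ :=
  ⟨(zpowers (γ i)).map (MulAut.conj g).toMonoidHom, g, i, rfl⟩

variable {γ}

theorem map_conj_mem_conjugatesOfZPowers (g : Γ) {H : Subgroup Γ}
    (hH : H ∈ conjugatesOfZPowers γ) :
    H.map (MulAut.conj g).toMonoidHom ∈ conjugatesOfZPowers γ := by
  obtain ⟨a, i, rfl⟩ := hH
  exact ⟨g * a, i, (map_conj_mul g a _).symm⟩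

theorem exists_zpowers_eq_of_mem_conjugatesOfZPowers (hγ : ∀ i, ¬IsOfFinOrder (γ i))
    {H : Subgroup Γ} (hH : H ∈ conjugatesOfZPowers γ) :
    ∃ x : Γ, ¬IsOfFinOrder x ∧ H = zpowers x := by
  obtain ⟨g, i, rfl⟩ := hH
  refine ⟨MulAut.conj g (γ i), ?_, MonoidHom.map_zpowers _ _⟩
  rw [← MulEquiv.coe_toMonoidHom,
    (MulAut.conj g).injective.isOfFinOrder_iff (f := (MulAut.conj g).toMonoidHom)]
  exact hγ i

theorem conjugatesOfZPowers.mk_mul_self (g : Γ) (i : ι) :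
    conjugatesOfZPowers.mk γ (g * γ i) i = conjugatesOfZPowers.mk γ g i := by
  refine Subtype.ext ?_
  simp only [conjugatesOfZPowers.mk, map_conj_mul]
  congr 1
  exact mem_normalizer_iff_map_conj_eq.mp (le_normalizer (mem_zpowers (γ i)))

theorem conjugatesOfZPowers.reachable_mk_of_commute {i j : ι} (h : Commute (γ i) (γ j))
    (g : Γ) :
    (commutingGraph (conjugatesOfZPowers γ)).Reachable (mk γ g i) (mk γ g j) := by
  refine commutingGraph.reachable_of_isMulCommutative_sup ?_
  change IsMulCommutative ↥((zpowers (γ i)).map _ ⊔ (zpowers (γ j)).map _)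
  have := isMulCommutative_zpowers_sup_zpowers h
  rw [← Subgroup.map_sup]
  infer_instance

theorem connected_commutingGraph_conjugatesOfZPowers {m : ℕ} (hm : 1 ≤ m) {γ : Fin m → Γ}
    (hcomm : ∀ i : Fin m, ∀ h : (i : ℕ) + 1 < m, Commute (γ i) (γ ⟨(i : ℕ) + 1, h⟩))
    (hgen : closure (Set.range γ) = ⊤) :
    (commutingGraph (conjugatesOfZPowers γ)).Connected := by
  have path : ∀ g i j, (commutingGraph (conjugatesOfZPowers γ)).Reachable
      (conjugatesOfZPowers.mk γ g i) (conjugatesOfZPowers.mk γ g j) := fun g =>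
    SimpleGraph.reachable_of_forall_reachable_succ fun i h =>
      conjugatesOfZPowers.reachable_mk_of_commute (hcomm i h) g
  let i₀ : Fin m := ⟨0, hm⟩
  have orbit : ∀ g, (commutingGraph (conjugatesOfZPowers γ)).Reachable
      (conjugatesOfZPowers.mk γ 1 i₀) (conjugatesOfZPowers.mk γ g i₀) := by
    refine SimpleGraph.reachable_of_closure_eq_top
      (f := (conjugatesOfZPowers.mk γ · i₀)) hgen ?_
    rintro g _ ⟨j, rfl⟩
    exact (path g i₀ j).trans
      (conjugatesOfZPowers.mk_mul_self g j ▸ path (g * γ j) j i₀)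
  have : Nonempty (conjugatesOfZPowers γ) := ⟨conjugatesOfZPowers.mk γ 1 i₀⟩
  refine ⟨?_⟩
  rintro ⟨_, g, i, rfl⟩ ⟨_, g', j, rfl⟩
  exact ((orbit g).trans (path g i₀ i)).symm.trans ((orbit g').trans (path g' i₀ j))

end ConjugatesOfZPowers

/-- Let `Γ` be generated by `γ₁, …, γₘ`, all of infinite order, with `[γᵢ, γᵢ₊₁] = 1`
(a chain-commuting generating set).  Let `V` be the set of subgroups `g⟨γᵢ⟩g⁻¹` and `G` the
graph on `V` where two distinct vertices are adjacent iff the subgroup they generate is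
abelian.  Then `G` is connected; the conjugation action of `Γ` preserves `V` with (at most)
`m` vertex orbits, namely the orbits of the `⟨γᵢ⟩`; every vertex is an infinite cyclic
subgroup (hence vertex stabilizers — the normalizers — contain an infinite cyclic normal
subgroup); and for every edge `{H, K}` the subgroup `H` is contained in the stabilizer of
the edge (the intersection of the two normalizers), in which it is an infinite cyclic
normal subgroup. -/
theorem statement13 {Γ : Type*} [Group Γ] (m : ℕ) (hm : 1 ≤ m) (γ : Fin m → Γ)
    (hord : ∀ i, ¬IsOfFinOrder (γ i))
    (hcomm : ∀ i : Fin m, ∀ h : (i : ℕ) + 1 < m, Commute (γ i) (γ ⟨(i : ℕ) + 1, h⟩))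
    (hgen : Subgroup.closure (Set.range γ) = ⊤) :
    let V : Set (Subgroup Γ) := {H | ∃ (g : Γ) (i : Fin m),
      H = Subgroup.map (MulAut.conj g).toMonoidHom (Subgroup.zpowers (γ i))}
    let G : SimpleGraph V :=
      { Adj := fun H K => H ≠ K ∧ IsMulCommutative ↥(H.1 ⊔ K.1)
        symm := ⟨fun H K h => ⟨h.1.symm, by rw [sup_comm]; exact h.2⟩⟩
        loopless := ⟨fun H h => h.1 rfl⟩ }
    G.Connected ∧
      (∀ (g : Γ) (H : Subgroup Γ), H ∈ V →
        Subgroup.map (MulAut.conj g).toMonoidHom H ∈ V) ∧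
      (∀ H ∈ V, ∃ i : Fin m, ∃ g : Γ,
        H = Subgroup.map (MulAut.conj g).toMonoidHom (Subgroup.zpowers (γ i))) ∧
      (∀ H ∈ V, ∃ x : Γ, ¬IsOfFinOrder x ∧ H = Subgroup.zpowers x) ∧
      (∀ H K : V, G.Adj H K → H.1 ≤ Subgroup.normalizer (H.1 : Set Γ) ⊓ Subgroup.normalizer (K.1 : Set Γ)) := by
  intro V G
  refine ⟨connected_commutingGraph_conjugatesOfZPowers hm hcomm hgen,
    fun g _ => map_conj_mem_conjugatesOfZPowers g, ?_,
    fun _ => exists_zpowers_eq_of_mem_conjugatesOfZPowers hord,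
    fun _ _ hadj => le_normalizer_inf_normalizer_of_isMulCommutative_sup hadj.2⟩
  rintro H ⟨g, i, rfl⟩
  exact ⟨i, g, rfl⟩
end

section
/- Let F be a free subgroup of SL_2(ℤ) containing no nontrivial unipotent element, and form the semidirect product Γ = F ⋉ ℤ² with F acting on ℤ² via the standard action of SL_2(ℤ). If (λ₁, a₁) and (λ₂, a₂) ∈ Γ commute and generate a subgroup isomorphic to ℤ², then λ₁ and λ₂ are trivial; consequently every subgroup of Γ isomorphic to ℤ² is contained in the normal subgroup {1} × ℤ². -/
/-- The action of a subgroup `F ≤ SL₂(ℤ)` on `ℤ²` (written multiplicatively), via the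
standard linear action of `SL₂(ℤ)` on `ℤ²`. -/
noncomputable def sdAct (F : Subgroup (Matrix.SpecialLinearGroup (Fin 2) ℤ)) :
    ↥F →* MulAut (Multiplicative (Fin 2 → ℤ)) where
  toFun A := AddEquiv.toMultiplicative
    ((Matrix.SpecialLinearGroup.toLin' (A : Matrix.SpecialLinearGroup (Fin 2) ℤ)).toAddEquiv)
  map_one' := by ext x; simp
  map_mul' A B := by ext x; simp

/-!
Commuting elements `λ₁, λ₂` of the free group `F` are powers `g ^ p`, `g ^ q` of one
element, so `z = x ^ q * y ^ (-p)` lies in the translation subgroup `ℤ²` of `Γ`. Since `x`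
and `y` generate a copy of `ℤ²`, they satisfy no relation `x ^ q = y ^ p` unless
`p = q = 0`, in which case `λ₁ = λ₂ = 1` outright; otherwise `z` is a nonzero translation
commuting with `x` and `y`. Conjugating `z` by `x` shows that `λ₁` fixes a nonzero vector of
`ℤ²`, so `λ₁` is unipotent, hence trivial; likewise for `λ₂`.
-/

open scoped Matrix

namespace Matrix

variable {R : Type*} [CommRing R]

theorem sq_eq_zero_of_trace_eq_zero_of_det_eq_zero [Nontrivial R]
    {M : Matrix (Fin 2) (Fin 2) R} (htr : M.trace = 0) (hdet : M.det = 0) : M ^ 2 = 0 := by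
  simpa [charpoly_fin_two, htr, hdet] using M.aeval_self_charpoly

theorem trace_sub_one_eq_zero_of_det_sub_one_eq_zero {A : Matrix (Fin 2) (Fin 2) R}
    (hA : A.det = 1) (h : (A - 1).det = 0) : (A - 1).trace = 0 := by
  rw [det_fin_two] at hA h
  simp only [one_fin_two, sub_apply, of_apply, cons_val', cons_val_zero, cons_val_fin_one,
    cons_val_one, sub_zero, trace_sub, trace_fin_two] at h ⊢
  linear_combination hA - h

theorem sq_sub_one_eq_zero_of_mulVec_eq_self [IsDomain R] {A : Matrix (Fin 2) (Fin 2) R}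
    (hA : A.det = 1) {w : Fin 2 → R} (hw : w ≠ 0) (hAw : A *ᵥ w = w) : (A - 1) ^ 2 = 0 := by
  have hdet : (A - 1).det = 0 :=
    exists_mulVec_eq_zero_iff.mp ⟨w, hw, by rw [sub_mulVec, hAw, one_mulVec, sub_self]⟩
  exact sq_eq_zero_of_trace_eq_zero_of_det_eq_zero
    (trace_sub_one_eq_zero_of_det_sub_one_eq_zero hA hdet) hdet

end Matrix

theorem FreeGroup.not_commute_of_ne {α : Type*} {s t : α} (hst : s ≠ t) :
    ¬Commute (of s) (of t) := by
  classical
  intro h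
  let f : FreeGroup α →* Equiv.Perm (Fin 3) :=
    lift fun x ↦ if x = s then Equiv.swap 0 1 else Equiv.swap 1 2
  have hswap : Equiv.swap (0 : Fin 3) 1 * Equiv.swap 1 2 = Equiv.swap 1 2 * Equiv.swap 0 1 := by
    simpa [f, hst.symm] using (h.map f).eq
  exact absurd hswap (by decide)

theorem IsFreeGroup.isCyclic_of_isMulCommutative (G : Type*) [Group G] [IsFreeGroup G]
    [IsMulCommutative G] : IsCyclic G := by
  let e := IsFreeGroup.toFreeGroup G
  have : Subsingleton (IsFreeGroup.Generators G) := ⟨fun s t ↦ by_contra fun hst ↦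
    FreeGroup.not_commute_of_ne hst <| by
      simpa using (show Commute (e.symm (.of s)) (e.symm (.of t)) from mul_comm' _ _).map e⟩
  rcases isEmpty_or_nonempty (IsFreeGroup.Generators G) with _ | ⟨⟨s⟩⟩
  · exact e.isCyclic.mpr inferInstance
  · have := uniqueOfSubsingleton s
    exact e.isCyclic.mpr inferInstance

theorem IsFreeGroup.exists_zpow_eq_of_commute {G : Type*} [Group G] [IsFreeGroup G] {a b : G}
    (h : Commute a b) : ∃ g : G, ∃ p q : ℤ, g ^ p = a ∧ g ^ q = b := by
  let K := Subgroup.closure ({a, b} : Set G)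
  have : IsMulCommutative K := Subgroup.isMulCommutative_closure <| by
    rintro x (rfl | rfl) y (rfl | rfl) <;> first | rfl | exact h.eq | exact h.symm.eq
  -- `K` is free by the Nielsen–Schreier theorem (`subgroupIsFreeOfIsFree`).
  obtain ⟨g, hg⟩ := (isCyclic_of_isMulCommutative K).exists_generator
  obtain ⟨p, hp⟩ := Subgroup.mem_zpowers_iff.mp (hg ⟨a, Subgroup.subset_closure (by simp)⟩)
  obtain ⟨q, hq⟩ := Subgroup.mem_zpowers_iff.mp (hg ⟨b, Subgroup.subset_closure (by simp)⟩)
  exact ⟨g, p, q, congrArg Subtype.val hp, congrArg Subtype.val hq⟩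

theorem eq_zero_of_zpow_eq_zpow_of_closure_pair_eq_top {u v : Multiplicative (ℤ × ℤ)}
    (hgen : Subgroup.closure {u, v} = ⊤) {p q : ℤ} (h : u ^ q = v ^ p) : q = 0 ∧ p = 0 := by
  let f : ℤ × ℤ →ₗ[ℤ] ℤ × ℤ :=
    (LinearMap.toSpanSingleton ℤ _ u.toAdd).coprod (LinearMap.toSpanSingleton ℤ _ v.toAdd)
  have hf : Function.Surjective f := fun w ↦ by
    obtain ⟨m, n, hmn⟩ :=
      Subgroup.mem_closure_pair.mp (hgen ▸ Subgroup.mem_top (Multiplicative.ofAdd w))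
    exact ⟨(m, n), congrArg Multiplicative.toAdd hmn⟩
  have hqp : f (q, -p) = f 0 := by
    have : q • u.toAdd = p • v.toAdd := congrArg Multiplicative.toAdd h
    simp [f, this]
  simpa using OrzechProperty.injective_of_surjective_endomorphism f hf hqp

theorem closure_ofAdd_basis_pair_eq_top :
    Subgroup.closure {Multiplicative.ofAdd ((1, 0) : ℤ × ℤ), Multiplicative.ofAdd (0, 1)} =
      ⊤ :=
  Subgroup.eq_top_iff' _ |>.mpr fun w ↦ Subgroup.mem_closure_pair.mpr
    ⟨w.toAdd.1, w.toAdd.2, Multiplicative.toAdd.injective (by simp)⟩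

theorem Subgroup.range_subtype_comp_mulEquiv {G M : Type*} [Group G] [Group M]
    {H : Subgroup G} (e : M ≃* H) : (H.subtype.comp e.toMonoidHom).range = H := by
  rw [MonoidHom.range_comp, MonoidHom.range_eq_top.mpr e.surjective, ← MonoidHom.range_eq_map,
    range_subtype]

theorem eq_zero_of_zpow_eq_zpow_of_closure_pair_mulEquiv {G : Type*} [Group G] {x y : G}
    (e : Subgroup.closure ({x, y} : Set G) ≃* Multiplicative (ℤ × ℤ)) {p q : ℤ}
    (h : x ^ q = y ^ p) : q = 0 ∧ p = 0 := by
  let ψ := (Subgroup.closure ({x, y} : Set G)).subtype.comp e.symm.toMonoidHom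
  have hψ : Function.Injective ψ := Subtype.val_injective.comp e.symm.injective
  obtain ⟨a, hx⟩ : ∃ a, ψ a = x :=
    ⟨e ⟨x, Subgroup.subset_closure (by simp)⟩, by simp [ψ]⟩
  obtain ⟨b, hy⟩ : ∃ b, ψ b = y :=
    ⟨e ⟨y, Subgroup.subset_closure (by simp)⟩, by simp [ψ]⟩
  have hgen : Subgroup.closure {a, b} = ⊤ := by
    refine Subgroup.map_injective hψ ?_
    rw [MonoidHom.map_closure, Set.image_pair, hx, hy, ← MonoidHom.range_eq_map,
      Subgroup.range_subtype_comp_mulEquiv]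
  exact eq_zero_of_zpow_eq_zpow_of_closure_pair_eq_top hgen <|
    hψ (by rw [map_zpow, map_zpow, hx, hy, h])

theorem Subgroup.exists_commute_closure_pair_eq_of_mulEquiv {G : Type*} [Group G]
    {H : Subgroup G} (e : H ≃* Multiplicative (ℤ × ℤ)) :
    ∃ x y : G, Commute x y ∧ closure {x, y} = H := by
  let ψ := H.subtype.comp e.symm.toMonoidHom
  refine ⟨ψ (.ofAdd (1, 0)), ψ (.ofAdd (0, 1)), (Commute.all _ _).map ψ, ?_⟩
  rw [← Set.image_pair, ← MonoidHom.map_closure, closure_ofAdd_basis_pair_eq_top,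
    ← MonoidHom.range_eq_map, range_subtype_comp_mulEquiv]

theorem SemidirectProduct.commute_inl_iff {N G : Type*} [CommGroup N] [Group G]
    {φ : G →* MulAut N} {x : N ⋊[φ] G} {n : N} :
    Commute x (inl n) ↔ φ x.right n = n := by
  simp [Commute, SemiconjBy, SemidirectProduct.ext_iff, mul_comm x.left]

theorem sdAct_apply (F : Subgroup (Matrix.SpecialLinearGroup (Fin 2) ℤ)) (A : F)
    (n : Multiplicative (Fin 2 → ℤ)) :
    sdAct F A n = .ofAdd ((A : Matrix (Fin 2) (Fin 2) ℤ) *ᵥ n.toAdd) := by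
  simp [sdAct, Matrix.SpecialLinearGroup.toLin'_apply, Matrix.toLin'_apply]

theorem right_eq_one_of_commute_inl {F : Subgroup (Matrix.SpecialLinearGroup (Fin 2) ℤ)}
    (hunip : ∀ A : Matrix.SpecialLinearGroup (Fin 2) ℤ, A ∈ F →
      ((A : Matrix (Fin 2) (Fin 2) ℤ) - 1) ^ 2 = 0 → A = 1)
    {x : Multiplicative (Fin 2 → ℤ) ⋊[sdAct F] F} {n : Multiplicative (Fin 2 → ℤ)}
    (hn : n ≠ 1) (h : Commute x (SemidirectProduct.inl n)) : x.right = 1 := by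
  have hfix := congrArg Multiplicative.toAdd (SemidirectProduct.commute_inl_iff.mp h)
  rw [sdAct_apply, toAdd_ofAdd] at hfix
  exact Subtype.ext <| hunip _ x.right.2 <|
    Matrix.sq_sub_one_eq_zero_of_mulVec_eq_self
      (x.right : Matrix.SpecialLinearGroup (Fin 2) ℤ).2 (by simpa using hn) hfix

theorem right_eq_one_of_commute_of_mulEquiv
    {F : Subgroup (Matrix.SpecialLinearGroup (Fin 2) ℤ)} [IsFreeGroup F]
    (hunip : ∀ A : Matrix.SpecialLinearGroup (Fin 2) ℤ, A ∈ F →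
      ((A : Matrix (Fin 2) (Fin 2) ℤ) - 1) ^ 2 = 0 → A = 1)
    {x y : Multiplicative (Fin 2 → ℤ) ⋊[sdAct F] F} (h : Commute x y)
    (e : Subgroup.closure {x, y} ≃* Multiplicative (ℤ × ℤ)) :
    x.right = 1 ∧ y.right = 1 := by
  obtain ⟨g, p, q, hp, hq⟩ :=
    IsFreeGroup.exists_zpow_eq_of_commute (h.map SemidirectProduct.rightHom)
  have hz : SemidirectProduct.rightHom (x ^ q * y ^ (-p)) = 1 := by
    rw [map_mul, map_zpow, map_zpow, ← hp, ← hq, ← zpow_mul, ← zpow_mul, ← zpow_add,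
      mul_neg, mul_comm q p, add_neg_cancel, zpow_zero]
  by_cases hz1 : x ^ q * y ^ (-p) = 1
  · rw [zpow_neg, mul_inv_eq_one] at hz1
    obtain ⟨rfl, rfl⟩ := eq_zero_of_zpow_eq_zpow_of_closure_pair_mulEquiv e hz1
    rw [zpow_zero] at hp hq
    exact ⟨hp.symm, hq.symm⟩
  · set z := x ^ q * y ^ (-p)
    have hzinl : z = SemidirectProduct.inl z.left := SemidirectProduct.ext rfl hz
    have hzl : z.left ≠ 1 := fun h1 ↦ hz1 (by rw [hzinl, h1, map_one])
    refine ⟨right_eq_one_of_commute_inl hunip hzl ?_, right_eq_one_of_commute_inl hunip hzl ?_⟩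
    · rw [← hzinl]
      exact ((Commute.refl x).zpow_right q).mul_right (h.zpow_right (-p))
    · rw [← hzinl]
      exact (h.symm.zpow_right q).mul_right ((Commute.refl y).zpow_right (-p))

/-- Let `F ≤ SL₂(ℤ)` be a free subgroup containing no nontrivial unipotent element, and
let `Γ = F ⋉ ℤ²` be the semidirect product for the standard action.  If two elements of `Γ`
commute and generate a subgroup isomorphic to `ℤ²`, then their `F`-components are trivial;
consequently every subgroup of `Γ` isomorphic to `ℤ²` lies in the normal subgroup
`{1} × ℤ²`. -/
theorem statement15 (F : Subgroup (Matrix.SpecialLinearGroup (Fin 2) ℤ))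
    [IsFreeGroup ↥F]
    (hunip : ∀ A : Matrix.SpecialLinearGroup (Fin 2) ℤ, A ∈ F →
      ((A : Matrix (Fin 2) (Fin 2) ℤ) - 1) ^ 2 = 0 → A = 1) :
    (∀ x y : Multiplicative (Fin 2 → ℤ) ⋊[sdAct F] ↥F,
      Commute x y →
      Nonempty (↥(Subgroup.closure {x, y}) ≃* Multiplicative (ℤ × ℤ)) →
      x.right = 1 ∧ y.right = 1) ∧
    (∀ H : Subgroup (Multiplicative (Fin 2 → ℤ) ⋊[sdAct F] ↥F),
      Nonempty (↥H ≃* Multiplicative (ℤ × ℤ)) →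
      H ≤ (SemidirectProduct.inl :
        Multiplicative (Fin 2 → ℤ) →* Multiplicative (Fin 2 → ℤ) ⋊[sdAct F] ↥F).range) := by
  refine ⟨fun x y h ⟨e⟩ ↦ right_eq_one_of_commute_of_mulEquiv hunip h e, ?_⟩
  rintro H ⟨e⟩
  obtain ⟨x, y, h, rfl⟩ := Subgroup.exists_commute_closure_pair_eq_of_mulEquiv e
  obtain ⟨hx, hy⟩ := right_eq_one_of_commute_of_mulEquiv hunip h e
  rw [SemidirectProduct.range_inl_eq_ker_rightHom, Subgroup.closure_le]
  rintro w (rfl | rfl)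
  exacts [hx, hy]
end
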